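/- arXiv:2205.14685 — 4 statements merged into one kernel-verified Lean document; each statement's English description precedes it below -/
import Mathlib

section
/- Let V be a finite type, K : V → V → ℝ a symmetric nonnegative weight function with zero diagonal whose support graph is connected, and L(K) its weighted Laplacian. Then for a vector P : V → ℝ, the linear system L(K) *ᵥ x = P has a solution x : V → ℝ if and only if Σ_{j ∈ V} P j = 0. -/
open Matrix

/-- The weighted Laplacian matrix of a weight function `K`: diagonal entries are
`∑ k, K i k`, off-diagonal entries are `-K i j`. -/
def weightedLaplacian {V : Type*} [Fintype V] [DecidableEq V] (K : V → V → ℝ) :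
    Matrix V V ℝ :=
  Matrix.of fun i j => if i = j then ∑ k, K i k else -K i j

/-- The support graph of a weight function `K`: `i` and `j` are adjacent iff `i ≠ j`
and `K i j > 0` (for symmetric `K`). -/
def supportGraph {V : Type*} (K : V → V → ℝ) : SimpleGraph V :=
  SimpleGraph.fromRel fun i j => 0 < K i j

lemma mulVec_wl {V : Type*} [Fintype V] [DecidableEq V] (K : V → V → ℝ)
    (hdiag : ∀ i, K i i = 0) (x : V → ℝ) (i : V) :
    (weightedLaplacian K).mulVec x i = ∑ j, K i j * (x i - x j) := by
  simp only [weightedLaplacian, mulVec, dotProduct, of_apply]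
  have h : ∀ j : V, (if i = j then ∑ k, K i k else -K i j) * x j
      = (if i = j then (∑ k, K i k + K i j) * x j else 0) + (-(K i j * x j)) := by
    intro j; split <;> ring
  rw [Finset.sum_congr rfl fun j _ => h j, Finset.sum_add_distrib,
    Finset.sum_ite_eq Finset.univ i]
  rw [hdiag i, add_zero, Finset.sum_mul, if_pos (Finset.mem_univ i), ← Finset.sum_add_distrib]
  exact Finset.sum_congr rfl fun j _ => by ring

lemma ker_const {V : Type*} [Fintype V] [DecidableEq V] (K : V → V → ℝ)
    (hsymm : ∀ i j, K i j = K j i) (hnonneg : ∀ i j, 0 ≤ K i j)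
    (hdiag : ∀ i, K i i = 0) (hconn : (supportGraph K).Connected)
    (x : V → ℝ) (hx : (weightedLaplacian K).mulVec x = 0) (i j : V) : x i = x j := by
  -- quadratic form vanishes
  have hA : ∑ i, ∑ j, K i j * x i * (x i - x j) = 0 := by
    have : ∀ i, x i * (weightedLaplacian K).mulVec x i = 0 := by
      intro i; rw [hx]; simp
    calc ∑ i, ∑ j, K i j * x i * (x i - x j)
        = ∑ i, x i * (weightedLaplacian K).mulVec x i := by
          refine Finset.sum_congr rfl fun i _ => ?_
          rw [mulVec_wl K hdiag, Finset.mul_sum]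
          exact Finset.sum_congr rfl fun j _ => by ring
      _ = 0 := by simp [this]
  have hB : ∑ i, ∑ j, K i j * x j * (x j - x i) = 0 := by
    rw [Finset.sum_comm]
    calc ∑ j, ∑ i, K i j * x j * (x j - x i)
        = ∑ j, ∑ i, K j i * x j * (x j - x i) :=
          Finset.sum_congr rfl fun j _ => Finset.sum_congr rfl fun i _ => by rw [hsymm]
      _ = 0 := hA
  have hS : ∑ i, ∑ j, K i j * (x i - x j) ^ 2 = 0 := by
    calc ∑ i, ∑ j, K i j * (x i - x j) ^ 2
        = (∑ i, ∑ j, K i j * x i * (x i - x j)) + ∑ i, ∑ j, K i j * x j * (x j - x i) := by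
          rw [← Finset.sum_add_distrib]
          refine Finset.sum_congr rfl fun i _ => ?_
          rw [← Finset.sum_add_distrib]
          exact Finset.sum_congr rfl fun j _ => by ring
      _ = 0 := by rw [hA, hB, add_zero]
  have hterm : ∀ i j : V, K i j * (x i - x j) ^ 2 = 0 := by
    have h1 := (Finset.sum_eq_zero_iff_of_nonneg (fun i _ =>
      Finset.sum_nonneg fun j _ => mul_nonneg (hnonneg i j) (sq_nonneg _))).mp hS
    intro i j
    have h2 := (Finset.sum_eq_zero_iff_of_nonneg (fun j _ =>
      mul_nonneg (hnonneg i j) (sq_nonneg _))).mp (h1 i (Finset.mem_univ i))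
    exact h2 j (Finset.mem_univ j)
  have hadj : ∀ i j : V, (supportGraph K).Adj i j → x i = x j := by
    intro i j hij
    rw [supportGraph, SimpleGraph.fromRel_adj] at hij
    have hK : 0 < K i j := by
      rcases hij.2 with h | h
      · exact h
      · rw [hsymm]; exact h
    have := hterm i j
    have h2 : (x i - x j) ^ 2 = 0 := by
      rcases mul_eq_zero.mp this with h | h
      · exact absurd h (ne_of_gt hK)
      · exact h
    have := pow_eq_zero_iff (n := 2) (by norm_num) |>.mp h2
    linarith [sub_eq_zero.mp this]
  obtain ⟨w⟩ := hconn.preconnected i j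
  induction w with
  | nil => rfl
  | cons h p ih => exact (hadj _ _ h).trans ih

/-- For a symmetric nonnegative weight function `K` with zero diagonal and connected
support graph, the system `L(K) x = P` has a solution iff `∑ j, P j = 0`. -/
theorem laplacian_solvable_iff_sum_zero
    {V : Type*} [Fintype V] [DecidableEq V] (K : V → V → ℝ)
    (hsymm : ∀ i j, K i j = K j i) (hnonneg : ∀ i j, 0 ≤ K i j)
    (hdiag : ∀ i, K i i = 0) (hconn : (supportGraph K).Connected)
    (P : V → ℝ) :
    (∃ x : V → ℝ, (weightedLaplacian K).mulVec x = P) ↔ ∑ j, P j = 0 := by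
  obtain ⟨i0⟩ := hconn.nonempty
  set f := (weightedLaplacian K).mulVecLin with hf
  have hfapp : ∀ x : V → ℝ, f x = (weightedLaplacian K).mulVec x := fun _ => rfl
  set g : (V → ℝ) →ₗ[ℝ] ℝ := ∑ j : V, LinearMap.proj j with hg
  have hgapp : ∀ Q : V → ℝ, g Q = ∑ j, Q j := by
    intro Q; simp [hg]
  -- range f ≤ ker g
  have hle : LinearMap.range f ≤ LinearMap.ker g := by
    rintro _ ⟨x, rfl⟩
    rw [LinearMap.mem_ker, hgapp, hfapp]
    calc ∑ i, (weightedLaplacian K).mulVec x i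
        = ∑ i, ∑ j, K i j * (x i - x j) := by
          exact Finset.sum_congr rfl fun i _ => mulVec_wl K hdiag x i
      _ = (∑ i, ∑ j, K i j * x i) - ∑ i, ∑ j, K i j * x j := by
          rw [← Finset.sum_sub_distrib]
          refine Finset.sum_congr rfl fun i _ => ?_
          rw [← Finset.sum_sub_distrib]
          exact Finset.sum_congr rfl fun j _ => by ring
      _ = 0 := by
          rw [sub_eq_zero, Finset.sum_comm]
          exact Finset.sum_congr rfl fun j _ => Finset.sum_congr rfl fun i _ => by
            rw [hsymm]
  -- kernel of f is the constants
  have hone : (fun _ : V => (1:ℝ)) ∈ LinearMap.ker f := by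
    rw [LinearMap.mem_ker]
    ext i
    rw [hfapp, mulVec_wl K hdiag]
    simp
  have hker : LinearMap.ker f = Submodule.span ℝ {fun _ : V => (1:ℝ)} := by
    apply le_antisymm
    · intro x hx
      have hx' : (weightedLaplacian K).mulVec x = 0 := hx
      have hc : x = (x i0) • (fun _ : V => (1:ℝ)) := by
        ext i
        simp [ker_const K hsymm hnonneg hdiag hconn x hx' i i0]
      rw [hc]
      exact Submodule.smul_mem _ _ (Submodule.mem_span_singleton_self _)
    · rw [Submodule.span_le, Set.singleton_subset_iff]
      exact hone
  have h1ne : (fun _ : V => (1:ℝ)) ≠ 0 := by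
    intro h
    have := congrFun h i0
    simp at this
  have hkerdim : Module.finrank ℝ (LinearMap.ker f) = 1 := by
    rw [hker, finrank_span_singleton h1ne]
  -- g is surjective
  have hgsurj : Function.Surjective g := by
    intro r
    refine ⟨fun j => if j = i0 then r else 0, ?_⟩
    rw [hgapp]
    simp
  have hdim : Module.finrank ℝ (V → ℝ) = Fintype.card V := Module.finrank_pi ℝ
  have hrn1 := LinearMap.finrank_range_add_finrank_ker f
  have hrn2 := LinearMap.finrank_range_add_finrank_ker g
  rw [hdim, hkerdim] at hrn1
  rw [LinearMap.range_eq_top.mpr hgsurj, hdim] at hrn2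
  have htop : Module.finrank ℝ (⊤ : Submodule ℝ ℝ) = 1 := by
    rw [finrank_top]; exact Module.finrank_self ℝ
  rw [htop] at hrn2
  have heq : LinearMap.range f = LinearMap.ker g :=
    Submodule.eq_of_le_of_finrank_eq hle (by omega)
  constructor
  · rintro ⟨x, hx⟩
    have : P ∈ LinearMap.ker g := heq ▸ ⟨x, hx⟩
    rw [LinearMap.mem_ker, hgapp] at this
    exact this
  · intro hP
    have : P ∈ LinearMap.range f := by
      rw [heq, LinearMap.mem_ker, hgapp]; exact hP
    obtain ⟨x, hx⟩ := this
    exact ⟨x, hx⟩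
end

section
/- Let V be a nonempty finite type, K : V → V → ℝ a symmetric nonnegative weight function with zero diagonal whose support graph is connected, and L(K) its weighted Laplacian. Then for every P : V → ℝ with Σ_{j ∈ V} P j = 0, there exists a unique x : V → ℝ such that L(K) *ᵥ x = P and Σ_{j ∈ V} x j = 0. -/
open Matrix

lemma lap_apply {V : Type*} [Fintype V] [DecidableEq V] (K : V → V → ℝ)
    (hdiag : ∀ i, K i i = 0) (x : V → ℝ) (a : V) :
    (weightedLaplacian K).mulVec x a = ∑ j, K a j * (x a - x j) := by
  simp only [weightedLaplacian, mulVec, dotProduct, of_apply]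
  have h : ∀ j : V, (if a = j then (∑ k, K a k) else -K a j) * x j
      = (if a = j then (∑ k, K a k) * x a else 0) - K a j * x j := by
    intro j
    by_cases hj : a = j
    · subst hj; simp [hdiag a]
    · simp [hj]
  calc ∑ j, (if a = j then (∑ k, K a k) else -K a j) * x j
      = ∑ j, ((if a = j then (∑ k, K a k) * x a else 0) - K a j * x j) :=
        Finset.sum_congr rfl fun j _ => h j
    _ = (∑ k, K a k) * x a - ∑ j, K a j * x j := by
        rw [Finset.sum_sub_distrib, Finset.sum_ite_eq Finset.univ a
          (fun _ => (∑ k, K a k) * x a)]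
        simp
    _ = ∑ j, K a j * (x a - x j) := by
        simp [mul_sub, Finset.sum_sub_distrib, Finset.sum_mul]

lemma lap_kernel_const {V : Type*} [Fintype V] [DecidableEq V] [Nonempty V]
    (K : V → V → ℝ)
    (hsymm : ∀ i j, K i j = K j i) (hnonneg : ∀ i j, 0 ≤ K i j)
    (hdiag : ∀ i, K i i = 0) (hconn : (supportGraph K).Connected)
    (x : V → ℝ) (hx : (weightedLaplacian K).mulVec x = 0) :
    ∀ i j : V, x i = x j := by
  obtain ⟨i0, hi0⟩ := Finite.exists_max x
  have step : ∀ a b : V, (supportGraph K).Adj a b → x a = x i0 → x b = x i0 := by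
    intro a b hab ha
    have h0 : ∑ j, K a j * (x a - x j) = 0 := by
      rw [← lap_apply K hdiag x a, hx]; rfl
    have hterm : ∀ j ∈ Finset.univ, 0 ≤ K a j * (x a - x j) := by
      intro j _
      exact mul_nonneg (hnonneg a j) (by rw [ha]; linarith [hi0 j])
    have hzero := (Finset.sum_eq_zero_iff_of_nonneg hterm).mp h0 b (Finset.mem_univ b)
    have hKab : 0 < K a b := by
      rcases hab with ⟨hne, h | h⟩
      · exact h
      · rw [hsymm]; exact h
    have : x a - x b = 0 := by
      rcases mul_eq_zero.mp hzero with h | h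
      · exact absurd h (ne_of_gt hKab)
      · exact h
    linarith [ha]
  have walk : ∀ a b : V, (supportGraph K).Walk a b → x a = x i0 → x b = x i0 := by
    intro a b w
    induction w with
    | nil => exact id
    | cons h p ih => intro ha; exact ih (step _ _ h ha)
  intro i j
  obtain ⟨wi⟩ := hconn i0 i
  obtain ⟨wj⟩ := hconn i0 j
  rw [walk _ _ wi rfl, walk _ _ wj rfl]

/-- For a symmetric nonnegative weight function `K` with zero diagonal and connected
support graph on a nonempty finite vertex set, and any balanced injection `P`
(`∑ j, P j = 0`), there exists a unique mean-zero solution `x` of `L(K) x = P`. -/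
theorem laplacian_existsUnique_meanZero_solution
    {V : Type*} [Fintype V] [DecidableEq V] [Nonempty V] (K : V → V → ℝ)
    (hsymm : ∀ i j, K i j = K j i) (hnonneg : ∀ i j, 0 ≤ K i j)
    (hdiag : ∀ i, K i i = 0) (hconn : (supportGraph K).Connected)
    (P : V → ℝ) (hP : ∑ j, P j = 0) :
    ∃! x : V → ℝ, (weightedLaplacian K).mulVec x = P ∧ ∑ j, x j = 0 := by
  classical
  set L := weightedLaplacian K with hL
  have hsum0 : ∀ x : V → ℝ, ∑ i, L.mulVec x i = 0 := by
    intro x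
    have h1 : ∀ a : V, L.mulVec x a = ∑ j, K a j * (x a - x j) :=
      lap_apply K hdiag x
    calc ∑ i, L.mulVec x i = ∑ i, ∑ j, K i j * (x i - x j) :=
          Finset.sum_congr rfl fun i _ => h1 i
      _ = (∑ i, ∑ j, K i j * x i) - (∑ i, ∑ j, K i j * x j) := by
          simp [mul_sub, Finset.sum_sub_distrib]
      _ = 0 := by
          rw [sub_eq_zero, Finset.sum_comm]
          exact Finset.sum_congr rfl fun i _ =>
            Finset.sum_congr rfl fun j _ => by rw [hsymm]
  let cmap : (V → ℝ) →ₗ[ℝ] (V → ℝ) :=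
    { toFun := fun x _ => ∑ j, x j
      map_add' := by intro x y; funext _; simp [Finset.sum_add_distrib]
      map_smul' := by intro c x; funext _; simp [Finset.mul_sum] }
  let g : (V → ℝ) →ₗ[ℝ] (V → ℝ) := L.mulVecLin + cmap
  have hg : ∀ x : V → ℝ, g x = fun i => L.mulVec x i + ∑ j, x j := fun x => rfl
  have hcard : (0 : ℝ) < Fintype.card V := by
    exact_mod_cast Fintype.card_pos
  have hginj : Function.Injective g := by
    rw [injective_iff_map_eq_zero]
    intro x hx0
    have hpt : ∀ i : V, L.mulVec x i + ∑ j, x j = 0 := by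
      intro i
      have := congrFun hx0 i
      rwa [hg] at this
    have hsumx : ∑ j, x j = 0 := by
      have : ∑ i, (L.mulVec x i + ∑ j, x j) = 0 := by
        simp [hpt]
      rw [Finset.sum_add_distrib, hsum0, Finset.sum_const, zero_add,
        nsmul_eq_mul] at this
      rcases mul_eq_zero.mp this with h | h
      · exact absurd h (ne_of_gt hcard)
      · exact h
    have hker : L.mulVec x = 0 := by
      funext i
      have := hpt i
      rw [hsumx] at this
      simpa using this
    have hconst := lap_kernel_const K hsymm hnonneg hdiag hconn x hker
    obtain ⟨i0⟩ := ‹Nonempty V›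
    have hxc : ∀ i, x i = x i0 := fun i => hconst i i0
    have : (Fintype.card V : ℝ) * x i0 = 0 := by
      rw [← hsumx]
      simp [Finset.sum_congr rfl fun i _ => hxc i, Finset.sum_const, nsmul_eq_mul]
    have hx0' : x i0 = 0 := by
      rcases mul_eq_zero.mp this with h | h
      · exact absurd h (ne_of_gt hcard)
      · exact h
    funext i
    rw [hxc i, hx0']; rfl
  have hgsurj : Function.Surjective g :=
    (LinearMap.injective_iff_surjective).mp hginj
  obtain ⟨x, hx⟩ := hgsurj P
  have hxpt : ∀ i : V, L.mulVec x i + ∑ j, x j = P i := by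
    intro i
    have := congrFun hx i
    rwa [hg] at this
  have hsumx : ∑ j, x j = 0 := by
    have : ∑ i, (L.mulVec x i + ∑ j, x j) = ∑ i, P i := by
      exact Finset.sum_congr rfl fun i _ => hxpt i
    rw [Finset.sum_add_distrib, hsum0, Finset.sum_const, zero_add,
      nsmul_eq_mul, hP] at this
    rcases mul_eq_zero.mp this with h | h
    · exact absurd h (ne_of_gt hcard)
    · exact h
  have hxsol : L.mulVec x = P := by
    funext i
    have := hxpt i
    rw [hsumx] at this
    simpa using this
  refine ⟨x, ⟨hxsol, hsumx⟩, ?_⟩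
  intro y ⟨hy1, hy2⟩
  apply hginj
  rw [hg, hg]
  funext i
  rw [hy2, hsumx, hxsol, hy1]
end

section
/- Let V be a finite type, K : V → V → ℝ a symmetric nonnegative weight function with zero diagonal, and L(K) its weighted Laplacian. Fix vertices a, b, i, j ∈ V with K a b > 0 and K i j > 0, and a real number I. Suppose x, y : V → ℝ satisfy L(K) *ᵥ x = I · (e_b − e_a) and L(K) *ᵥ y = (I · K i j / K a b) · (e_i − e_j). Then the current across (i,j) in the first configuration equals the current across (a,b) in the second configuration: K i j · (x i − x j) = K a b · (y b − y a). That is, placing a constant current source of strength I·K i j/K a b across edge (i,j) reproduces at edge (a,b) exactly the current that a source of strength I across (a,b) produces at edge (i,j). -/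
open Matrix

/-! The Laplacian is symmetric, so `x ⬝ᵥ L y = y ⬝ᵥ L x`; pairing each configuration with the
other's source turns this into the stated identity of currents, after cancelling `I`. When
`I = 0` both potentials lie in the kernel of `L`, whose quadratic form
`½ ∑ K u v (z u - z v)²` forces them to agree across every edge of positive weight. -/

section WeightedLaplacian

variable {V : Type*} [Fintype V] [DecidableEq V] {K : V → V → ℝ}

theorem weightedLaplacian_transpose (hsymm : ∀ i j, K i j = K j i) :
    (weightedLaplacian K)ᵀ = weightedLaplacian K := by
  ext u v
  rcases eq_or_ne u v with rfl | huv
  · rfl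
  · simp [weightedLaplacian, huv, huv.symm, hsymm u v]

theorem dotProduct_weightedLaplacian_mulVec_comm (hsymm : ∀ i j, K i j = K j i)
    (x y : V → ℝ) :
    x ⬝ᵥ weightedLaplacian K *ᵥ y = y ⬝ᵥ weightedLaplacian K *ᵥ x := by
  rw [dotProduct_mulVec, ← mulVec_transpose, weightedLaplacian_transpose hsymm,
    dotProduct_comm]

theorem weightedLaplacian_mulVec_apply (hdiag : ∀ i, K i i = 0) (z : V → ℝ) (u : V) :
    (weightedLaplacian K *ᵥ z) u = ∑ v, K u v * (z u - z v) := by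
  have hrow : ∀ v, weightedLaplacian K u v * z v
      = (if u = v then (∑ k, K u k) * z u else 0) - K u v * z v := by
    intro v
    rcases eq_or_ne u v with rfl | huv
    · simp [weightedLaplacian, hdiag]
    · simp [weightedLaplacian, huv]
  simp only [mulVec, dotProduct, hrow, Finset.sum_sub_distrib, Finset.sum_ite_eq,
    Finset.mem_univ, if_true, mul_sub, Finset.sum_mul]

theorem dotProduct_weightedLaplacian_mulVec_self (hsymm : ∀ i j, K i j = K j i)
    (hdiag : ∀ i, K i i = 0) (z : V → ℝ) :
    z ⬝ᵥ weightedLaplacian K *ᵥ z = (∑ u, ∑ v, K u v * (z u - z v) ^ 2) / 2 := by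
  have hform : z ⬝ᵥ weightedLaplacian K *ᵥ z = ∑ u, ∑ v, K u v * (z u * (z u - z v)) := by
    simp only [dotProduct, weightedLaplacian_mulVec_apply hdiag, Finset.mul_sum]
    exact Fintype.sum_congr _ _ fun u => Fintype.sum_congr _ _ fun v => by ring
  have hswap : ∑ u, ∑ v, K u v * (z u * (z u - z v))
      = ∑ u, ∑ v, K u v * (-z v * (z u - z v)) := by
    rw [Finset.sum_comm]
    exact Fintype.sum_congr _ _ fun u => Fintype.sum_congr _ _ fun v => by
      rw [hsymm]; ring
  have hsum : ∑ u, ∑ v, K u v * (z u - z v) ^ 2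
      = ∑ u, ∑ v, K u v * (z u * (z u - z v)) + ∑ u, ∑ v, K u v * (-z v * (z u - z v)) := by
    simp only [← Finset.sum_add_distrib]
    exact Fintype.sum_congr _ _ fun u => Fintype.sum_congr _ _ fun v => by ring
  rw [hform, hsum, ← hswap]
  ring

theorem eq_of_weightedLaplacian_mulVec_eq_zero (hsymm : ∀ i j, K i j = K j i)
    (hnonneg : ∀ i j, 0 ≤ K i j) (hdiag : ∀ i, K i i = 0) {z : V → ℝ}
    (hz : weightedLaplacian K *ᵥ z = 0) {p q : V} (hpq : K p q ≠ 0) : z p = z q := by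
  have hterm_nonneg : ∀ u v, 0 ≤ K u v * (z u - z v) ^ 2 :=
    fun u v => mul_nonneg (hnonneg u v) (sq_nonneg _)
  have htotal : ∑ u, ∑ v, K u v * (z u - z v) ^ 2 = 0 := by
    have := dotProduct_weightedLaplacian_mulVec_self hsymm hdiag z
    rw [hz, dotProduct_zero] at this
    linarith
  have hrow : ∑ v, K p v * (z p - z v) ^ 2 = 0 :=
    congrFun ((Fintype.sum_eq_zero_iff_of_nonneg fun u =>
      Fintype.sum_nonneg (hterm_nonneg u)).mp htotal) p
  have hpq_term : K p q * (z p - z q) ^ 2 = 0 :=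
    congrFun ((Fintype.sum_eq_zero_iff_of_nonneg (hterm_nonneg p)).mp hrow) q
  exact sub_eq_zero.mp <| pow_eq_zero_iff two_ne_zero |>.mp <|
    (mul_eq_zero.mp hpq_term).resolve_left hpq

theorem dotProduct_smul_single_sub_single (z : V → ℝ) (c : ℝ) (p q : V) :
    z ⬝ᵥ (c • (Pi.single p 1 - Pi.single q 1)) = c * (z p - z q) := by
  rw [dotProduct_smul, dotProduct_sub, dotProduct_single, dotProduct_single, smul_eq_mul,
    mul_one, mul_one]

end WeightedLaplacian

/-- Placing a constant current source of strength `I·K i j/K a b` across edge `(i,j)`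
reproduces at edge `(a,b)` exactly the current that a source of strength `I` across
`(a,b)` produces at edge `(i,j)`. -/
theorem current_source_reciprocity
    {V : Type*} [Fintype V] [DecidableEq V] (K : V → V → ℝ)
    (hsymm : ∀ i j, K i j = K j i) (hnonneg : ∀ i j, 0 ≤ K i j)
    (hdiag : ∀ i, K i i = 0)
    (a b i j : V) (hKab : 0 < K a b) (hKij : 0 < K i j) (I : ℝ)
    (x y : V → ℝ)
    (hx : (weightedLaplacian K).mulVec x = I • (Pi.single b 1 - Pi.single a 1))
    (hy : (weightedLaplacian K).mulVec y
        = (I * K i j / K a b) • (Pi.single i 1 - Pi.single j 1)) :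
    K i j * (x i - x j) = K a b * (y b - y a) := by
  rcases eq_or_ne I 0 with rfl | hI
  · have hx0 : weightedLaplacian K *ᵥ x = 0 := by simpa using hx
    have hy0 : weightedLaplacian K *ᵥ y = 0 := by simpa using hy
    rw [eq_of_weightedLaplacian_mulVec_eq_zero hsymm hnonneg hdiag hx0 hKij.ne',
      eq_of_weightedLaplacian_mulVec_eq_zero hsymm hnonneg hdiag hy0 (hsymm b a ▸ hKab.ne')]
    ring
  · have hrecip := dotProduct_weightedLaplacian_mulVec_comm hsymm x y
    rw [hx, hy, dotProduct_smul_single_sub_single, dotProduct_smul_single_sub_single]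
      at hrecip
    field_simp at hrecip
    exact hrecip
end

section
/- Spanning-tree formula for the direction of current (unweighted Kirchhoff / Shapiro lemma, unit conductances). Let G be a connected simple graph on a finite vertex set V, let L be its (unweighted) Laplacian matrix, and let s ≠ t be vertices. Suppose x : V → ℝ satisfies L *ᵥ x = e_s − e_t (unit current injected at s and extracted at t). Then for every pair of adjacent vertices a, b of G: (x a − x b) · τ(G) = N(s, a→b, t) − N(s, b→a, t), where τ(G) is the number of spanning trees of G, N(s, a→b, t) is the number of spanning trees T of G such that the unique path in T from s to t uses the edge {a,b} and visits a before b, and N(s, b→a, t) is defined analogously with b before a. In particular, the current through edge {a,b} is directed from a to b exactly when N(s, a→b, t) > N(s, b→a, t). -/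
/-!
Let `y u` count the spanning forests of `G` with exactly two trees, one containing `s` and the
other `t`, in which `u` lies in the tree of `s`. Removing the edge `{a, b}` from a spanning tree
whose `s`–`t` path crosses it from `a` to `b` leaves such a forest with `a` on the side of `s`
and `b` on the side of `t`, and adding the edge back inverts this; hence
`y a - y b = N(s, a→b, t) - N(s, b→a, t)` for every edge. Summing over the neighbours of `v`, and
using that each `s`–`t` path leaves `s` once, enters `t` once and otherwise enters and leaves
every vertex equally often, gives `L y = τ(G) (e_s - e_t)`. Thus `τ(G) x - y` is in the kernel
of the Laplacian of the connected graph `G`, so it is constant.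
-/

open Matrix

/-- `T` is a spanning tree of `G`: a subgraph (on the same vertex set) that is a tree. -/
def IsSpanningTree {V : Type*} (G T : SimpleGraph V) : Prop :=
  T ≤ G ∧ T.IsTree

/-- The unique path in the tree `T` from `s` to `t` uses the edge `{a,b}` and visits
`a` before `b` (i.e. it traverses the dart `(a,b)`). -/
def PathUsesDart {V : Type*} (T : SimpleGraph V) (s t a b : V) : Prop :=
  ∃ p : T.Walk s t, p.IsPath ∧ ∃ d ∈ p.darts, d.toProd = (a, b)

lemma natCard_sub_natCard {α : Type*} [Finite α] (p q : α → Prop) :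
    (Nat.card {x // p x} : ℤ) - Nat.card {x // q x} =
      Nat.card {x // p x ∧ ¬q x} - Nat.card {x // q x ∧ ¬p x} := by
  have hp := Set.ncard_inter_add_ncard_sdiff_eq_ncard {x | p x} {x | q x} (Set.toFinite _)
  have hq := Set.ncard_inter_add_ncard_sdiff_eq_ncard {x | q x} {x | p x} (Set.toFinite _)
  rw [Set.inter_comm] at hq
  simp only [← Nat.card_coe_set_eq] at hp hq
  change Nat.card {x // p x ∧ q x} + Nat.card {x // p x ∧ ¬q x} = Nat.card {x // p x} at hp
  change Nat.card {x // p x ∧ q x} + Nat.card {x // q x ∧ ¬p x} = Nat.card {x // q x} at hq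
  omega

open scoped Classical in
lemma natCard_subtype_and_eq_sum {α R : Type*} [Fintype α] [AddCommMonoidWithOne R]
    (p q : α → Prop) :
    (Nat.card {x // p x ∧ q x} : R) = ∑ x : {x // p x}, if q x then 1 else 0 := by
  rw [← Nat.card_congr (Equiv.subtypeSubtypeEquivSubtypeInter p q), Nat.card_eq_fintype_card,
    Fintype.card_subtype, Finset.card_filter]
  push_cast
  rfl

namespace SimpleGraph

variable {V : Type*} {G T F : SimpleGraph V} {s t a b u v : V}

lemma Walk.IsTrail.reachable_deleteEdges_dart_fst {p : G.Walk u v} (hp : p.IsTrail)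
    {d : G.Dart} (hd : d ∈ p.darts) : (G.deleteEdges {d.edge}).Reachable u d.fst := by
  induction p with
  | nil => simp at hd
  | cons h q ih =>
    rw [Walk.isTrail_cons] at hp
    rw [Walk.darts_cons, List.mem_cons] at hd
    rcases hd with rfl | hd
    · rfl
    · have hne : s(_, _) ≠ d.edge := fun he => hp.2 (he ▸ List.mem_map_of_mem hd)
      exact (Adj.reachable (by simpa [h] using hne)).trans (ih hp.1 hd)

lemma Walk.IsTrail.reachable_deleteEdges_dart_snd {p : G.Walk u v} (hp : p.IsTrail)
    {d : G.Dart} (hd : d ∈ p.darts) : (G.deleteEdges {d.edge}).Reachable v d.snd := by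
  simpa using hp.reverse.reachable_deleteEdges_dart_fst (d := d.symm) (by simpa using hd)

lemma Walk.sum_count_darts_sub_count_darts {R : Type*} [AddCommGroupWithOne R] [Fintype V]
    [DecidableEq V] (p : G.Walk s t) (v : V) :
    ∑ u, (((p.darts.map Dart.toProd).count (v, u) : R) - (p.darts.map Dart.toProd).count (u, v)) =
      (Pi.single s 1 - Pi.single t 1 : V → R) v := by
  induction p with
  | nil => simp
  | @cons s c t h q ih =>
    simp only [Walk.darts_cons, List.map_cons, List.count_cons, Nat.cast_add, add_sub_add_comm,
      Finset.sum_add_distrib, ih, beq_iff_eq, Prod.mk.injEq]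
    have hs : ∑ x, ((if s = v ∧ c = x then 1 else 0 : ℕ) : R) = (Pi.single s 1 : V → R) v := by
      by_cases hv : s = v
      · subst hv; simp
      · simp [hv]
    have hc : ∑ x, ((if s = x ∧ c = v then 1 else 0 : ℕ) : R) = (Pi.single c 1 : V → R) v := by
      by_cases hv : c = v
      · subst hv; simp
      · simp [hv]
    rw [Finset.sum_sub_distrib, hs, hc, Pi.sub_apply, Pi.sub_apply]
    abel

lemma reachable_deleteEdges_or_of_walk (p : T.Walk u v)
    (hu : (T.deleteEdges {s(a, b)}).Reachable a u ∨ (T.deleteEdges {s(a, b)}).Reachable b u) :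
    (T.deleteEdges {s(a, b)}).Reachable a v ∨ (T.deleteEdges {s(a, b)}).Reachable b v := by
  induction p with
  | nil => exact hu
  | @cons u w _ h q ih =>
    apply ih
    by_cases he : s(u, w) = s(a, b)
    · rcases Sym2.eq_iff.mp he with ⟨-, rfl⟩ | ⟨-, rfl⟩
      exacts [.inr .rfl, .inl .rfl]
    · have hF : (T.deleteEdges {s(a, b)}).Reachable u w := Adj.reachable (by simp [h, he])
      exact hu.imp (·.trans hF) (·.trans hF)

lemma Preconnected.reachable_deleteEdges_or (hT : T.Preconnected) (a b v : V) :
    (T.deleteEdges {s(a, b)}).Reachable a v ∨ (T.deleteEdges {s(a, b)}).Reachable b v :=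
  reachable_deleteEdges_or_of_walk (hT a v).some (.inl .rfl)

lemma deleteEdges_sup_edge_of_adj (h : T.Adj a b) : T.deleteEdges {s(a, b)} ⊔ edge a b = T := by
  ext u v
  simp only [sup_adj, deleteEdges_adj, edge_adj, Set.mem_singleton_iff, Sym2.eq_iff]
  grind [Adj.symm, Adj.ne]

lemma sup_edge_deleteEdges_of_not_adj (h : ¬F.Adj a b) :
    (F ⊔ edge a b).deleteEdges {s(a, b)} = F := by
  simp [deleteEdges_eq_self, h]

end SimpleGraph

open SimpleGraph

section

variable {V : Type*} {G T F : SimpleGraph V} {s t a b u v : V}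

lemma PathUsesDart.adj (h : PathUsesDart T s t a b) : T.Adj a b := by
  obtain ⟨-, -, d, -, hd⟩ := h
  simpa [hd] using d.adj

lemma pathUsesDart_iff_of_isBridge (hab : T.Adj a b) (hbr : T.IsBridge s(a, b)) :
    PathUsesDart T s t a b ↔
      (T.deleteEdges {s(a, b)}).Reachable s a ∧ (T.deleteEdges {s(a, b)}).Reachable b t := by
  rw [isBridge_iff] at hbr
  constructor
  · rintro ⟨p, hp, d, hd, hde⟩
    obtain rfl : d = ⟨(a, b), hab⟩ := Dart.ext _ _ hde
    exact ⟨hp.isTrail.reachable_deleteEdges_dart_fst hd,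
      (hp.isTrail.reachable_deleteEdges_dart_snd hd).symm⟩
  · rintro ⟨hsa, hbt⟩
    obtain ⟨p, hp⟩ := ((hsa.mono (deleteEdges_le _)).trans
      (hab.reachable.trans (hbt.mono (deleteEdges_le _)))).exists_isPath
    have hst : ¬(T.deleteEdges {s(a, b)}).Reachable s t :=
      fun h => hbr (hsa.symm.trans (h.trans hbt.symm))
    obtain ⟨d, hd, hde⟩ := List.mem_map.mp (p.mem_edges_of_not_reachable_deleteEdges hst)
    rcases dart_edge_eq_mk'_iff'.mp hde with ⟨h1, h2⟩ | ⟨h1, h2⟩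
    · exact ⟨p, hp, d, hd, Prod.ext h1 h2⟩
    · -- the part of `p` before it crosses from `b` to `a` would join `s` to `b` in the forest
      have hsb := hp.isTrail.reachable_deleteEdges_dart_fst hd
      rw [hde, h1] at hsb
      exact absurd (hsa.symm.trans hsb) hbr

open scoped Classical in
lemma SimpleGraph.IsTree.sum_pathUsesDart_sub {R : Type*} [AddCommGroupWithOne R] [Fintype V]
    [DecidableEq V] (hT : T.IsTree) (s t v : V) :
    ∑ u, ((if PathUsesDart T s t v u then 1 else 0) - (if PathUsesDart T s t u v then 1 else 0) : R)
      = (Pi.single s 1 - Pi.single t 1 : V → R) v := by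
  obtain ⟨p, hp, hunique⟩ := hT.existsUnique_path s t
  have huses : ∀ a b, PathUsesDart T s t a b ↔ (a, b) ∈ p.darts.map Dart.toProd := fun a b =>
    ⟨fun ⟨q, hq, hd⟩ => hunique q hq ▸ List.mem_map.mpr hd,
      fun h => ⟨p, hp, List.mem_map.mp h⟩⟩
  have hnodup : (p.darts.map Dart.toProd).Nodup :=
    (p.darts_nodup_of_support_nodup hp.support_nodup).map Dart.toProd_injective
  have hcount : ∀ a b, (if PathUsesDart T s t a b then 1 else 0 : R) =
      (p.darts.map Dart.toProd).count (a, b) := fun a b => by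
    by_cases h : PathUsesDart T s t a b
    · simp [h, List.count_eq_one_of_mem hnodup ((huses a b).mp h)]
    · simp [h, List.count_eq_zero_of_not_mem (mt (huses a b).mpr h)]
  simp only [hcount]
  exact p.sum_count_darts_sub_count_darts v

def IsTwoForest (G : SimpleGraph V) (s t : V) (F : SimpleGraph V) : Prop :=
  F ≤ G ∧ F.IsAcyclic ∧ ¬F.Reachable s t ∧ ∀ v, F.Reachable s v ∨ F.Reachable t v

lemma IsTwoForest.not_reachable_iff (hF : IsTwoForest G s t F) (v : V) :
    ¬F.Reachable s v ↔ F.Reachable t v :=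
  ⟨(hF.2.2.2 v).resolve_left, fun htv hsv => hF.2.2.1 (hsv.trans htv.symm)⟩

lemma IsTwoForest.not_adj (hF : IsTwoForest G s t F) (hsa : F.Reachable s a)
    (htb : F.Reachable t b) : ¬F.Adj a b :=
  fun h => hF.2.2.1 (hsa.trans (h.reachable.trans htb.symm))

lemma isSpanningTree_and_pathUsesDart_iff (hab : G.Adj a b) (hT : T.Adj a b) :
    IsSpanningTree G T ∧ PathUsesDart T s t a b ↔
      IsTwoForest G s t (T.deleteEdges {s(a, b)}) ∧
        (T.deleteEdges {s(a, b)}).Reachable s a ∧ (T.deleteEdges {s(a, b)}).Reachable t b := by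
  set F := T.deleteEdges {s(a, b)}
  have hFT : F ≤ T := deleteEdges_le _
  constructor
  · rintro ⟨⟨hTG, hTtree⟩, hpath⟩
    have hbr : T.IsBridge s(a, b) := isAcyclic_iff_forall_adj_isBridge.mp hTtree.isAcyclic hT
    obtain ⟨hsa, hbt⟩ := (pathUsesDart_iff_of_isBridge hT hbr).mp hpath
    refine ⟨⟨hFT.trans hTG, hTtree.isAcyclic.anti hFT,
      fun hst => hbr (hsa.symm.trans (hst.trans hbt.symm)), fun v => ?_⟩, hsa, hbt.symm⟩
    exact (hTtree.connected.preconnected.reachable_deleteEdges_or a b v).imp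
      hsa.trans hbt.symm.trans
  · rintro ⟨⟨hFG, hFacyc, hFst, hFcover⟩, hsa, htb⟩
    have hab' : ¬F.Reachable a b := fun h => hFst (hsa.trans (h.trans htb.symm))
    have hTF : F ⊔ edge a b = T := deleteEdges_sup_edge_of_adj hT
    have hst : T.Reachable s t := (hsa.mono hFT).trans (hT.reachable.trans (htb.mono hFT).symm)
    refine ⟨⟨hTF ▸ sup_le hFG ((edge_le_iff _).mpr (.inr hab)), ?_, ?_⟩, ?_⟩
    · exact (connected_iff_exists_forall_reachable T).mpr ⟨s, fun v =>
        (hFcover v).elim (·.mono hFT) fun htv => hst.trans (htv.mono hFT)⟩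
    · exact hTF ▸ hFacyc.sup_edge_of_not_reachable hab'
    · exact (pathUsesDart_iff_of_isBridge hT (isBridge_iff.mpr hab')).mpr ⟨hsa, htb.symm⟩

def twoForestEquiv (hab : G.Adj a b) :
    {F // IsTwoForest G s t F ∧ F.Reachable s a ∧ F.Reachable t b} ≃
      {T // IsSpanningTree G T ∧ PathUsesDart T s t a b} where
  toFun F := ⟨F.1 ⊔ edge a b, by
    refine (isSpanningTree_and_pathUsesDart_iff hab (by simp [edge_adj, hab.ne])).mpr ?_
    rw [sup_edge_deleteEdges_of_not_adj (F.2.1.not_adj F.2.2.1 F.2.2.2)]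
    exact F.2⟩
  invFun T := ⟨T.1.deleteEdges {s(a, b)},
    (isSpanningTree_and_pathUsesDart_iff hab T.2.2.adj).mp T.2⟩
  left_inv F := Subtype.ext (sup_edge_deleteEdges_of_not_adj (F.2.1.not_adj F.2.2.1 F.2.2.2))
  right_inv T := Subtype.ext (deleteEdges_sup_edge_of_adj T.2.2.adj)

noncomputable def twoForestPotential (G : SimpleGraph V) (s t u : V) : ℝ :=
  Nat.card {F // IsTwoForest G s t F ∧ F.Reachable s u}

lemma twoForestPotential_sub [Finite V] (hab : G.Adj a b) :
    twoForestPotential G s t a - twoForestPotential G s t b =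
      (Nat.card {T // IsSpanningTree G T ∧ PathUsesDart T s t a b} : ℝ) -
        Nat.card {T // IsSpanningTree G T ∧ PathUsesDart T s t b a} := by
  have hcard : ∀ {a b}, G.Adj a b →
      Nat.card {F // (IsTwoForest G s t F ∧ F.Reachable s a) ∧
          ¬(IsTwoForest G s t F ∧ F.Reachable s b)} =
        Nat.card {T // IsSpanningTree G T ∧ PathUsesDart T s t a b} := fun hab =>
    Nat.card_congr <| (Equiv.subtypeEquivRight fun F => by
      by_cases hF : IsTwoForest G s t F
      · simp [hF, hF.not_reachable_iff]
      · simp [hF]).trans (twoForestEquiv hab)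
  have := natCard_sub_natCard (fun F => IsTwoForest G s t F ∧ F.Reachable s a)
    (fun F => IsTwoForest G s t F ∧ F.Reachable s b)
  rw [hcard hab, hcard hab.symm] at this
  unfold twoForestPotential
  exact_mod_cast this

lemma lapMatrix_mulVec_twoForestPotential [Fintype V] [DecidableEq V] [DecidableRel G.Adj]
    (s t : V) :
    G.lapMatrix ℝ *ᵥ twoForestPotential G s t =
      (Nat.card {T // IsSpanningTree G T} : ℝ) • (Pi.single s 1 - Pi.single t 1) := by
  classical
  have htree : ∀ T : {T // IsSpanningTree G T}, ∀ v,
      ∑ u ∈ G.neighborFinset v, ((if PathUsesDart T.1 s t v u then 1 else 0) -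
        (if PathUsesDart T.1 s t u v then 1 else 0) : ℝ) =
          (Pi.single s 1 - Pi.single t 1 : V → ℝ) v := by
    intro T v
    obtain ⟨hTG, hT⟩ := T.2
    rw [← hT.sum_pathUsesDart_sub]
    refine Finset.sum_subset (Finset.subset_univ _) fun u _ hu => ?_
    have hvu : ¬G.Adj v u := by simpa using hu
    rw [if_neg fun h => hvu (hTG h.adj), if_neg fun h => hvu (hTG h.adj).symm, sub_zero]
  ext v
  rw [lapMatrix_mulVec_apply]
  calc (G.degree v : ℝ) * twoForestPotential G s t v -
        ∑ u ∈ G.neighborFinset v, twoForestPotential G s t u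
      = ∑ u ∈ G.neighborFinset v, (twoForestPotential G s t v - twoForestPotential G s t u) := by
        rw [Finset.sum_sub_distrib, Finset.sum_const, card_neighborFinset_eq_degree, nsmul_eq_mul]
    _ = ∑ u ∈ G.neighborFinset v,
          ((Nat.card {T // IsSpanningTree G T ∧ PathUsesDart T s t v u} : ℝ) -
            Nat.card {T // IsSpanningTree G T ∧ PathUsesDart T s t u v}) :=
        Finset.sum_congr rfl fun u hu => twoForestPotential_sub ((mem_neighborFinset _ _ _).mp hu)
    _ = ∑ T : {T // IsSpanningTree G T}, ∑ u ∈ G.neighborFinset v,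
          ((if PathUsesDart T.1 s t v u then 1 else 0) -
            (if PathUsesDart T.1 s t u v then 1 else 0) : ℝ) := by
        simp only [natCard_subtype_and_eq_sum, ← Finset.sum_sub_distrib]
        exact Finset.sum_comm
    _ = _ := by
        simp only [htree, Finset.sum_const, Finset.card_univ, ← Nat.card_eq_fintype_card,
          nsmul_eq_mul, Pi.smul_apply, smul_eq_mul]

end

theorem spanning_tree_current_formula_general
    {V : Type*} [Fintype V] [DecidableEq V] (G : SimpleGraph V) [DecidableRel G.Adj]
    (hG : G.Connected) (s t : V) (x : V → ℝ)
    (hx : (G.lapMatrix ℝ).mulVec x = Pi.single s 1 - Pi.single t 1)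
    (a b : V) (hab : G.Adj a b) :
    (x a - x b) * (Nat.card {T : SimpleGraph V // IsSpanningTree G T} : ℝ)
        = (Nat.card {T : SimpleGraph V //
              IsSpanningTree G T ∧ PathUsesDart T s t a b} : ℝ)
          - (Nat.card {T : SimpleGraph V //
              IsSpanningTree G T ∧ PathUsesDart T s t b a} : ℝ) ∧
    (0 < x a - x b ↔
      Nat.card {T : SimpleGraph V // IsSpanningTree G T ∧ PathUsesDart T s t b a}
        < Nat.card {T : SimpleGraph V // IsSpanningTree G T ∧ PathUsesDart T s t a b}) := by
  set τ : ℝ := (Nat.card {T : SimpleGraph V // IsSpanningTree G T} : ℝ)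
  have hτ : 0 < τ := by
    obtain ⟨T, hTG, hT⟩ := hG.exists_isTree_le
    have : Nonempty {T // IsSpanningTree G T} := ⟨⟨T, hTG, hT⟩⟩
    exact Nat.cast_pos.mpr Nat.card_pos
  have hker : G.lapMatrix ℝ *ᵥ (τ • x - twoForestPotential G s t) = 0 := by
    rw [mulVec_sub, mulVec_smul, hx, lapMatrix_mulVec_twoForestPotential, sub_self]
  have hconst :=
    (lapMatrix_mulVec_eq_zero_iff_forall_reachable G).mp hker a b (hG.preconnected a b)
  have hformula : (x a - x b) * τ = twoForestPotential G s t a - twoForestPotential G s t b := by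
    simp only [Pi.sub_apply, Pi.smul_apply, smul_eq_mul] at hconst
    linarith
  rw [twoForestPotential_sub hab] at hformula
  refine ⟨hformula, ?_⟩
  rw [← mul_pos_iff_of_pos_right hτ, hformula, sub_pos, Nat.cast_lt]

/-- Spanning-tree formula for the direction of current (unweighted Kirchhoff/Shapiro
lemma): if `L x = e_s - e_t` for the Laplacian of a connected graph `G`, then for every
edge `(a,b)`, `(x a - x b) · τ(G) = N(s,a→b,t) - N(s,b→a,t)`; in particular the current
flows from `a` to `b` exactly when `N(s,a→b,t) > N(s,b→a,t)`. -/
theorem spanning_tree_current_formula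
    {V : Type*} [Fintype V] [DecidableEq V] (G : SimpleGraph V) [DecidableRel G.Adj]
    (hG : G.Connected) (s t : V) (hst : s ≠ t) (x : V → ℝ)
    (hx : (G.lapMatrix ℝ).mulVec x = Pi.single s 1 - Pi.single t 1)
    (a b : V) (hab : G.Adj a b) :
    (x a - x b) * (Nat.card {T : SimpleGraph V // IsSpanningTree G T} : ℝ)
        = (Nat.card {T : SimpleGraph V //
              IsSpanningTree G T ∧ PathUsesDart T s t a b} : ℝ)
          - (Nat.card {T : SimpleGraph V //
              IsSpanningTree G T ∧ PathUsesDart T s t b a} : ℝ) ∧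
    (0 < x a - x b ↔
      Nat.card {T : SimpleGraph V // IsSpanningTree G T ∧ PathUsesDart T s t b a}
        < Nat.card {T : SimpleGraph V // IsSpanningTree G T ∧ PathUsesDart T s t a b}) :=
  spanning_tree_current_formula_general G hG s t x hx a b hab
end
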